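/- Let Ω be a finite state space containing four distinct states ω_1, ω_2, ω_3, ω_4, and let X: Ω → ℝ satisfy X(ω_1) = a, X(ω_2) = d, X(ω_3) = b, X(ω_4) = d where (d − a)(d − b) > 0 (so either a, b < d or a, b > d). Define Π_1 as the partition of Ω with cells {ω_1, ω_2}, {ω_3, ω_4} and singletons for all other states, and Π_2 as the partition with cells {ω_1, ω_4}, {ω_2, ω_3} and singletons elsewhere. Fix m ∈ (0, 1/2) and p ∈ (0, 1 − 2m) satisfying a·p/(p + m) + d·m/(p + m) = b·(1 − p − 2m)/(1 − p − m) + d·m/(1 − p − m), and define the prior μ by μ(ω_1) = p, μ(ω_2) = m, μ(ω_3) = 1 − p − 2m, μ(ω_4) = m, and μ(ω) = 0 otherwise. Then E_μ[X | Π_i(ω)] = a·p/(p + m) + d·m/(p + m) for i = 1, 2 and every ω ∈ supp μ, and X is non-separable at μ under Π = (Π_1, Π_2) with value v = a·p/(p + m) + d·m/(p + m). -/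

import Mathlib

noncomputable section
open scoped Classical
open Finset

/-- A partition of `Ω` given by its cell map: `C ω` is the cell containing `ω`. -/
def IsPartitionFun {Ω : Type*} (C : Ω → Set Ω) : Prop :=
  (∀ ω, ω ∈ C ω) ∧ ∀ ω ω', ω' ∈ C ω → C ω' = C ω

/-- The fine-join property: the intersection of all traders' cells at `ω` is `{ω}`. -/
def FineJoin {Ω : Type*} {n : ℕ} (C : Fin n → Ω → Set Ω) : Prop :=
  ∀ ω ω', (∀ i, ω' ∈ C i ω) → ω' = ω

/-- A prior: a probability distribution on the finite state space. -/
def IsPrior {Ω : Type*} [Fintype Ω] (μ : Ω → ℝ) : Prop :=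
  (∀ ω, 0 ≤ μ ω) ∧ ∑ ω, μ ω = 1

/-- Support of a prior. -/
def suppSet {Ω : Type*} (μ : Ω → ℝ) : Set Ω := {ω | 0 < μ ω}

/-- Conditional expectation `E_μ[X | S]`. -/
def condExp {Ω : Type*} [Fintype Ω] (μ X : Ω → ℝ) (S : Set Ω) : ℝ :=
  (∑ ω, if ω ∈ S then μ ω * X ω else 0) / (∑ ω, if ω ∈ S then μ ω else 0)

/-- `X` is non-separable at prior `μ` with value `v` under the information structure `C`. -/
def NonSeparableAt {Ω : Type*} [Fintype Ω] {n : ℕ}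
    (C : Fin n → Ω → Set Ω) (X μ : Ω → ℝ) (v : ℝ) : Prop :=
  (∃ ω ∈ suppSet μ, X ω ≠ v) ∧
  ∀ (i : Fin n) (ω : Ω), ω ∈ suppSet μ → condExp μ X (C i ω) = v

/-- `X` is separable under the information structure `C`. -/
def SeparableSec {Ω : Type*} [Fintype Ω] {n : ℕ}
    (C : Fin n → Ω → Set Ω) (X : Ω → ℝ) : Prop :=
  ¬ ∃ (μ : Ω → ℝ) (v : ℝ), IsPrior μ ∧ NonSeparableAt C X μ v

/-- Arrow–Debreu security: pays `a` at one state, `b ≠ a` at all other states. -/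
def ArrowDebreu {Ω : Type*} (X : Ω → ℝ) : Prop :=
  ∃ (a b : ℝ) (ωs : Ω), a ≠ b ∧ X ωs = a ∧ ∀ ω, ω ≠ ωs → X ω = b

/-- Three-value form: pays `a < b < d` with `a` at one state, `d` at another, `b` elsewhere. -/
def ThreeValueForm {Ω : Type*} (X : Ω → ℝ) : Prop :=
  ∃ (a b d : ℝ) (ωa ωd : Ω), a < b ∧ b < d ∧ ωa ≠ ωd ∧
    X ωa = a ∧ X ωd = d ∧ ∀ ω, ω ≠ ωa → ω ≠ ωd → X ω = b

/- The prior vanishes off `ω1, …, ω4`, so at every state of the support each trader's cell is one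
of the pairs `{ω1, ω2}, {ω3, ω4}` or `{ω1, ω4}, {ω2, ω3}`. On a pair the conditional expectation is
a two-point weighted mean: on the pairs through `ω1` it is the left side of the equalizing
equation, on the others its right side. The common value is not `d = X ω2`, since `a ≠ d` and
`p > 0`. -/

theorem condExp_pair {Ω : Type*} [Fintype Ω] (μ X : Ω → ℝ) {x y : Ω} (hxy : x ≠ y) :
    condExp μ X {x, y} = (μ x * X x + μ y * X y) / (μ x + μ y) := by
  simp only [condExp, ← Finset.coe_pair, Finset.mem_coe, Finset.sum_ite_mem, Finset.univ_inter,
    Finset.sum_pair hxy]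

theorem condExp_pairCells_eq {Ω : Type*} [Fintype Ω] (μ X : Ω → ℝ) {x y z w ω : Ω} {v : ℝ}
    (hxy : condExp μ X {x, y} = v) (hzw : condExp μ X {z, w} = v)
    (hω : ω = x ∨ ω = y ∨ ω = z ∨ ω = w) :
    condExp μ X ((fun ω => if ω = x ∨ ω = y then ({x, y} : Set Ω)
      else if ω = z ∨ ω = w then ({z, w} : Set Ω) else {ω}) ω) = v := by
  dsimp only
  split_ifs with h₁ h₂
  · exact hxy
  · exact hzw
  · tauto

theorem weighted_mean_ne_right {a d p m : ℝ} (had : a ≠ d) (hp : p ≠ 0) (hpm : p + m ≠ 0) :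
    a * p / (p + m) + d * m / (p + m) ≠ d := by
  rw [← add_div, ne_eq, div_eq_iff hpm]
  intro h
  have : (a - d) * p = 0 := by linear_combination h
  exact had (sub_eq_zero.mp ((mul_eq_zero.mp this).resolve_right hp))

theorem nonseparable_adbd_general {Ω : Type*} [Fintype Ω] (X : Ω → ℝ)
    (ω1 ω2 ω3 ω4 : Ω)
    (h12 : ω1 ≠ ω2) (h13 : ω1 ≠ ω3) (h14 : ω1 ≠ ω4)
    (h23 : ω2 ≠ ω3) (h24 : ω2 ≠ ω4) (h34 : ω3 ≠ ω4)
    (a b d : ℝ)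
    (hX1 : X ω1 = a) (hX2 : X ω2 = d) (hX3 : X ω3 = b) (hX4 : X ω4 = d)
    (habd : (d - a) * (d - b) > 0)
    (C1 C2 : Ω → Set Ω)
    (hC1 : C1 = fun ω => if ω = ω1 ∨ ω = ω2 then ({ω1, ω2} : Set Ω)
                 else if ω = ω3 ∨ ω = ω4 then ({ω3, ω4} : Set Ω) else {ω})
    (hC2 : C2 = fun ω => if ω = ω1 ∨ ω = ω4 then ({ω1, ω4} : Set Ω)
                 else if ω = ω2 ∨ ω = ω3 then ({ω2, ω3} : Set Ω) else {ω})
    (m p : ℝ) (hm0 : 0 < m)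
    (hp0 : 0 < p)
    (heq : a * p / (p + m) + d * m / (p + m)
            = b * (1 - p - 2 * m) / (1 - p - m) + d * m / (1 - p - m))
    (μ : Ω → ℝ)
    (hμ : μ = fun ω => if ω = ω1 then p else if ω = ω2 then m
                 else if ω = ω3 then 1 - p - 2 * m
                 else if ω = ω4 then m else 0) :
    (∀ (i : Fin 2) (ω : Ω), ω ∈ suppSet μ →
        condExp μ X (![C1, C2] i ω) = a * p / (p + m) + d * m / (p + m)) ∧
    NonSeparableAt ![C1, C2] X μ (a * p / (p + m) + d * m / (p + m)) := by
  set v := a * p / (p + m) + d * m / (p + m)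
  have hμ1 : μ ω1 = p := by simp [hμ]
  have hμ2 : μ ω2 = m := by simp [hμ, h12.symm]
  have hμ3 : μ ω3 = 1 - p - 2 * m := by simp [hμ, h13.symm, h23.symm]
  have hμ4 : μ ω4 = m := by simp [hμ, h14.symm, h24.symm, h34.symm]
  have hsupp : ∀ ω ∈ suppSet μ, ω = ω1 ∨ ω = ω2 ∨ ω = ω3 ∨ ω = ω4 := by
    intro ω hω
    by_contra! h
    simp [suppSet, hμ, h.1, h.2.1, h.2.2.1, h.2.2.2] at hω
  have h12v : condExp μ X {ω1, ω2} = v := by rw [condExp_pair μ X h12, hμ1, hμ2, hX1, hX2]; ring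
  have h14v : condExp μ X {ω1, ω4} = v := by rw [condExp_pair μ X h14, hμ1, hμ4, hX1, hX4]; ring
  have h34v : condExp μ X {ω3, ω4} = v := by
    rw [condExp_pair μ X h34, hμ3, hμ4, hX3, hX4, heq]; ring
  have h23v : condExp μ X {ω2, ω3} = v := by
    rw [condExp_pair μ X h23, hμ2, hμ3, hX2, hX3, heq]; ring
  have hcells : ∀ (i : Fin 2) (ω : Ω), ω ∈ suppSet μ → condExp μ X (![C1, C2] i ω) = v := by
    intro i ω hω
    have hω' := hsupp ω hω
    fin_cases i
    · subst hC1; exact condExp_pairCells_eq μ X h12v h34v hω'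
    · subst hC2; exact condExp_pairCells_eq μ X h14v h23v (by tauto)
  have hda : d ≠ a := sub_ne_zero.mp (left_ne_zero_of_mul habd.ne')
  have hω2 : ω2 ∈ suppSet μ := by simp [suppSet, hμ2, hm0]
  refine ⟨hcells, ⟨ω2, hω2, ?_⟩, hcells⟩
  rw [hX2]
  exact (weighted_mean_ne_right hda.symm hp0.ne' (by positivity)).symm

/-- with the `(a, d, b, d)` payoff structure and the equalizing
prior `(p, m, 1 - p - 2m, m)`, both traders' conditional expectations agree and
`X` is non-separable at the prior. -/
theorem nonseparable_adbd {Ω : Type*} [Fintype Ω] (X : Ω → ℝ)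
    (ω1 ω2 ω3 ω4 : Ω)
    (h12 : ω1 ≠ ω2) (h13 : ω1 ≠ ω3) (h14 : ω1 ≠ ω4)
    (h23 : ω2 ≠ ω3) (h24 : ω2 ≠ ω4) (h34 : ω3 ≠ ω4)
    (a b d : ℝ)
    (hX1 : X ω1 = a) (hX2 : X ω2 = d) (hX3 : X ω3 = b) (hX4 : X ω4 = d)
    (habd : (d - a) * (d - b) > 0)
    (C1 C2 : Ω → Set Ω)
    (hC1 : C1 = fun ω => if ω = ω1 ∨ ω = ω2 then ({ω1, ω2} : Set Ω)
                 else if ω = ω3 ∨ ω = ω4 then ({ω3, ω4} : Set Ω) else {ω})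
    (hC2 : C2 = fun ω => if ω = ω1 ∨ ω = ω4 then ({ω1, ω4} : Set Ω)
                 else if ω = ω2 ∨ ω = ω3 then ({ω2, ω3} : Set Ω) else {ω})
    (m p : ℝ) (hm0 : 0 < m) (hm1 : m < 1 / 2)
    (hp0 : 0 < p) (hp1 : p < 1 - 2 * m)
    (heq : a * p / (p + m) + d * m / (p + m)
            = b * (1 - p - 2 * m) / (1 - p - m) + d * m / (1 - p - m))
    (μ : Ω → ℝ)
    (hμ : μ = fun ω => if ω = ω1 then p else if ω = ω2 then m
                 else if ω = ω3 then 1 - p - 2 * m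
                 else if ω = ω4 then m else 0) :
    (∀ (i : Fin 2) (ω : Ω), ω ∈ suppSet μ →
        condExp μ X (![C1, C2] i ω) = a * p / (p + m) + d * m / (p + m)) ∧
    NonSeparableAt ![C1, C2] X μ (a * p / (p + m) + d * m / (p + m)) :=
  nonseparable_adbd_general X ω1 ω2 ω3 ω4 h12 h13 h14 h23 h24 h34 a b d hX1 hX2 hX3 hX4 habd C1 C2
    hC1 hC2 m p hm0 hp0 heq μ hμ
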